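/- arXiv:2409.11779 — 5 statements merged into one kernel-verified Lean document; each statement's English description precedes it below -/
import Mathlib

section
/- Let Q be a finite set of distinct points in R^d. The number of points in Q whose nearest neighbor in Q is a fixed point q_1 is at most 3^d. -/
/-!
Translate so that the fixed point is the origin and push every point whose nearest neighbour it is
radially onto the unit sphere. If `‖u‖ ≤ ‖w‖ ≤ ‖u - w‖`, then
`u / ‖u‖ - w / ‖w‖ = (u - w) / ‖u‖ + (1 / ‖u‖ - 1 / ‖w‖) • w` has norm at least
`(‖u - w‖ - ‖w‖) / ‖u‖ + 1 ≥ 1`, so the projected points are `1`-separated unit vectors (in any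
norm). The balls of radius `1/2` around them are disjoint and lie in the ball of radius `3/2`,
so comparing volumes bounds their number by `3 ^ d`.
-/

open Metric MeasureTheory Module
open scoped ENNReal

section

variable {E : Type*} [NormedAddCommGroup E] [NormedSpace ℝ E]

theorem card_le_of_norm_le_of_pairwise_one_le_dist [FiniteDimensional ℝ E] (s : Finset E)
    {r : ℝ} (hr : 0 ≤ r) (hs : ∀ x ∈ s, ‖x‖ ≤ r) (h : ∀ x ∈ s, ∀ y ∈ s, x ≠ y → 1 ≤ dist x y) :
    (s.card : ℝ) ≤ (2 * r + 1) ^ finrank ℝ E := by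
  borelize E
  let μ : Measure E := Measure.addHaar
  have hdisj : (s : Set E).PairwiseDisjoint (ball · (1 / 2)) := fun x hx y hy hxy =>
    ball_disjoint_ball (by linarith [h x hx y hy hxy])
  have hsub : ⋃ x ∈ s, ball x (1 / 2) ⊆ ball (0 : E) (r + 1 / 2) :=
    Set.iUnion₂_subset fun x hx => ball_subset_ball' (by rw [dist_zero_right]; linarith [hs x hx])
  have hvol : (s.card : ℝ≥0∞) * ENNReal.ofReal ((1 / 2) ^ finrank ℝ E) * μ (ball 0 1) ≤
      ENNReal.ofReal ((r + 1 / 2) ^ finrank ℝ E) * μ (ball 0 1) := calc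
    _ = μ (⋃ x ∈ s, ball x (1 / 2)) := by
      rw [measure_biUnion_finset hdisj fun _ _ => measurableSet_ball]
      simp only [μ.addHaar_ball_of_pos _ one_half_pos, Finset.sum_const, nsmul_eq_mul, mul_assoc]
    _ ≤ μ (ball 0 (r + 1 / 2)) := measure_mono hsub
    _ = _ := μ.addHaar_ball_of_pos _ (by positivity)
  have hreal := ENNReal.toReal_le_of_le_ofReal (by positivity)
    ((ENNReal.mul_le_mul_iff_left (measure_ball_pos _ _ one_pos).ne' measure_ball_lt_top.ne).1 hvol)
  rw [ENNReal.toReal_mul, ENNReal.toReal_natCast, ENNReal.toReal_ofReal (by positivity)] at hreal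
  calc (s.card : ℝ) = s.card * (1 / 2) ^ finrank ℝ E * 2 ^ finrank ℝ E := by
        rw [mul_assoc, ← mul_pow]; norm_num
    _ ≤ (r + 1 / 2) ^ finrank ℝ E * 2 ^ finrank ℝ E := by gcongr
    _ = (2 * r + 1) ^ finrank ℝ E := by rw [← mul_pow]; ring_nf

theorem one_le_norm_sub_inv_norm_smul {u w : E} (hu₀ : u ≠ 0) (hw₀ : w ≠ 0)
    (hu : ‖u‖ ≤ ‖u - w‖) (hw : ‖w‖ ≤ ‖u - w‖) : 1 ≤ ‖‖u‖⁻¹ • u - ‖w‖⁻¹ • w‖ := by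
  wlog huw : ‖u‖ ≤ ‖w‖ generalizing u w
  · rw [norm_sub_rev] at hu hw ⊢
    exact this hw₀ hu₀ hw hu (le_of_not_ge huw)
  have ha : 0 < ‖u‖ := norm_pos_iff.2 hu₀
  have hsplit : ‖u‖⁻¹ • u - ‖w‖⁻¹ • w = ‖u‖⁻¹ • (u - w) + (‖u‖⁻¹ - ‖w‖⁻¹) • w := by module
  have hcoef : 0 ≤ ‖u‖⁻¹ - ‖w‖⁻¹ := sub_nonneg.2 (inv_anti₀ ha huw)
  have hgap : 0 ≤ (‖u - w‖ - ‖w‖) / ‖u‖ := div_nonneg (sub_nonneg.2 hw) ha.le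
  calc 1 ≤ 1 + (‖u - w‖ - ‖w‖) / ‖u‖ := le_add_of_nonneg_right hgap
    _ = ‖‖u‖⁻¹ • (u - w)‖ - ‖(‖u‖⁻¹ - ‖w‖⁻¹) • w‖ := by
        rw [norm_smul, norm_smul, Real.norm_of_nonneg (inv_nonneg.2 ha.le),
          Real.norm_of_nonneg hcoef]
        field_simp
        ring
    _ ≤ ‖‖u‖⁻¹ • u - ‖w‖⁻¹ • w‖ := hsplit ▸ norm_sub_le_norm_add _ _

theorem card_le_three_pow_finrank_of_forall_dist_le [FiniteDimensional ℝ E] (P : Finset E)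
    {p : E} (hp : p ∉ P) (hP : ∀ x ∈ P, ∀ y ∈ P, y ≠ x → dist x p ≤ dist x y) :
    P.card ≤ 3 ^ finrank ℝ E := by
  classical
  let f : E → E := fun x => ‖x - p‖⁻¹ • (x - p)
  have hne : ∀ x ∈ P, x - p ≠ 0 := fun x hx => sub_ne_zero.2 (ne_of_mem_of_not_mem hx hp)
  have hsep : ∀ x ∈ P, ∀ y ∈ P, x ≠ y → 1 ≤ dist (f x) (f y) := by
    intro x hx y hy hxy
    rw [dist_eq_norm]
    refine one_le_norm_sub_inv_norm_smul (hne x hx) (hne y hy) ?_ ?_ <;>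
      rw [← dist_eq_norm, ← dist_eq_norm, dist_sub_right]
    · exact hP x hx y hy (Ne.symm hxy)
    · rw [dist_comm x]
      exact hP y hy x hx hxy
  have hinj : Set.InjOn f P := fun x hx y hy hfxy => by
    by_contra hxy
    have := hsep x hx y hy hxy
    rw [hfxy, dist_self] at this
    exact zero_lt_one.not_ge this
  have hcard := card_le_of_norm_le_of_pairwise_one_le_dist (P.image f) zero_le_one
    (by simp only [Finset.forall_mem_image]; exact fun x hx => (norm_smul_inv_norm (hne x hx)).le)
    (by simp only [Finset.forall_mem_image]
        exact fun x hx y hy hxy => hsep x hx y hy fun h => hxy (h ▸ rfl))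
  rw [Finset.card_image_of_injOn hinj] at hcard
  norm_num at hcard
  exact_mod_cast hcard

end

/-- In a finite set of distinct points in `ℝ^d`, the number of points
whose nearest neighbor is a fixed point `q i₀` is at most `3^d`. -/
theorem stmt5 (d n : ℕ) (q : Fin n → EuclideanSpace ℝ (Fin d))
    (hq : Function.Injective q) (i₀ : Fin n) :
    ((Finset.univ.filter (fun i : Fin n => i ≠ i₀ ∧
        ∀ j, j ≠ i → j ≠ i₀ → dist (q i) (q i₀) ≤ dist (q i) (q j))).card : ℕ)
      ≤ 3 ^ d := by
  set S := Finset.univ.filter (fun i : Fin n => i ≠ i₀ ∧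
      ∀ j, j ≠ i → j ≠ i₀ → dist (q i) (q i₀) ≤ dist (q i) (q j))
  have hp : q i₀ ∉ S.image q := by
    simp only [Finset.mem_image, not_exists, not_and]
    exact fun i hi hqi => (Finset.mem_filter.1 hi).2.1 (hq hqi)
  have hP : ∀ x ∈ S.image q, ∀ y ∈ S.image q, y ≠ x → dist x (q i₀) ≤ dist x y := by
    simp only [Finset.forall_mem_image]
    intro i hi j hj hji
    exact (Finset.mem_filter.1 hi).2.2 j (fun h => hji (h ▸ rfl)) (Finset.mem_filter.1 hj).2.1
  simpa [Finset.card_image_of_injective S hq, finrank_euclideanSpace_fin] using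
    card_le_three_pow_finrank_of_forall_dist_le (S.image q) hp hP
end

section
/- Let q_1, q_x, q_y be distinct points in R^d such that q_1 is the nearest neighbor of both q_x and q_y among the whole point set (in particular ‖q_x − q_y‖ ≥ ‖q_x − q_1‖ and ‖q_x − q_y‖ ≥ ‖q_y − q_1‖). Let r > 0 with r ≤ ‖q_x − q_1‖ and r ≤ ‖q_y − q_1‖, and let q_x', q_y' be the points on the segments from q_1 to q_x and q_1 to q_y respectively at distance r from q_1. Then ‖q_x' − q_y'‖ ≥ r. -/
/-!
The hypotheses say that in the triangle `q₁ qx qy` the side `qx qy` is the longest, so the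
angle at `q₁` is at least `π / 3`, i.e. `2 ⟪u, v⟫ ≤ ‖u‖ ‖v‖` for `u = qx - q₁`, `v = qy - q₁`.
Two points at distance `r` from `q₁` seen under such an angle are at distance at least `r`.
-/

section RealInnerProductSpace

variable {E : Type*} [NormedAddCommGroup E] [InnerProductSpace ℝ E]

open RealInnerProductSpace

theorem two_inner_le_norm_mul_norm_of_norm_le_norm_sub {x y : E}
    (hx : ‖x‖ ≤ ‖x - y‖) (hy : ‖y‖ ≤ ‖x - y‖) : 2 * ⟪x, y⟫ ≤ ‖x‖ * ‖y‖ := by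
  have hxy : ‖x - y‖ ^ 2 = ‖x‖ ^ 2 - 2 * ⟪x, y⟫ + ‖y‖ ^ 2 := norm_sub_sq_real x y
  have hx' : 2 * ⟪x, y⟫ ≤ ‖y‖ ^ 2 := by nlinarith [norm_nonneg x]
  have hy' : 2 * ⟪x, y⟫ ≤ ‖x‖ ^ 2 := by nlinarith [norm_nonneg y]
  rcases le_total ‖x‖ ‖y‖ with h | h
  · nlinarith [norm_nonneg x]
  · nlinarith [norm_nonneg y]

theorem one_le_norm_sub_of_two_inner_le_one {a b : E} (ha : ‖a‖ = 1) (hb : ‖b‖ = 1)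
    (hab : 2 * ⟪a, b⟫ ≤ 1) : 1 ≤ ‖a - b‖ := by
  have h : ‖a - b‖ ^ 2 = ‖a‖ ^ 2 - 2 * ⟪a, b⟫ + ‖b‖ ^ 2 := norm_sub_sq_real a b
  rw [ha, hb] at h
  nlinarith [norm_nonneg (a - b)]

theorem one_le_norm_normalize_sub_normalize {x y : E} (hx0 : x ≠ 0) (hy0 : y ≠ 0)
    (hx : ‖x‖ ≤ ‖x - y‖) (hy : ‖y‖ ≤ ‖x - y‖) :
    1 ≤ ‖‖x‖⁻¹ • x - ‖y‖⁻¹ • y‖ := by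
  have hxpos : 0 < ‖x‖ := norm_pos_iff.mpr hx0
  have hypos : 0 < ‖y‖ := norm_pos_iff.mpr hy0
  refine one_le_norm_sub_of_two_inner_le_one (norm_smul_inv_norm hx0) (norm_smul_inv_norm hy0) ?_
  have hinner : 2 * ⟪‖x‖⁻¹ • x, ‖y‖⁻¹ • y⟫ = 2 * ⟪x, y⟫ / (‖x‖ * ‖y‖) := by
    rw [real_inner_smul_left, real_inner_smul_right]
    field_simp
  rw [hinner, div_le_one (mul_pos hxpos hypos)]
  exact two_inner_le_norm_mul_norm_of_norm_le_norm_sub hx hy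

end RealInnerProductSpace

theorem stmt6_general (d : ℕ) (q₁ qx qy : EuclideanSpace ℝ (Fin d)) (r : ℝ)
    (hx1 : qx ≠ q₁) (hy1 : qy ≠ q₁)
    (h1 : ‖qx - qy‖ ≥ ‖qx - q₁‖) (h2 : ‖qx - qy‖ ≥ ‖qy - q₁‖) :
    ‖(q₁ + (r / ‖qx - q₁‖) • (qx - q₁)) - (q₁ + (r / ‖qy - q₁‖) • (qy - q₁))‖
      ≥ r := by
  have hsub : (qx - q₁) - (qy - q₁) = qx - qy := sub_sub_sub_cancel_right qx qy q₁
  have hunit : 1 ≤ ‖‖qx - q₁‖⁻¹ • (qx - q₁) - ‖qy - q₁‖⁻¹ • (qy - q₁)‖ :=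
    one_le_norm_normalize_sub_normalize (sub_ne_zero.mpr hx1) (sub_ne_zero.mpr hy1)
      (hsub ▸ h1) (hsub ▸ h2)
  have hvec : (q₁ + (r / ‖qx - q₁‖) • (qx - q₁)) - (q₁ + (r / ‖qy - q₁‖) • (qy - q₁))
      = r • (‖qx - q₁‖⁻¹ • (qx - q₁) - ‖qy - q₁‖⁻¹ • (qy - q₁)) := by
    simp only [add_sub_add_left_eq_sub, smul_sub, smul_smul, div_eq_mul_inv]
  rw [hvec, norm_smul, Real.norm_eq_abs, ge_iff_le]
  calc r ≤ |r| := le_abs_self r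
    _ ≤ |r| * _ := le_mul_of_one_le_right (abs_nonneg r) hunit

/-- If `q₁` is the nearest neighbor of both `qx` and `qy`, then the
radial projections of `qx` and `qy` onto the sphere of radius `r` around `q₁`
are at distance at least `r` from each other. -/
theorem stmt6 (d : ℕ) (q₁ qx qy : EuclideanSpace ℝ (Fin d)) (r : ℝ)
    (hx1 : qx ≠ q₁) (hy1 : qy ≠ q₁) (hxy : qx ≠ qy)
    (h1 : ‖qx - qy‖ ≥ ‖qx - q₁‖) (h2 : ‖qx - qy‖ ≥ ‖qy - q₁‖)
    (hr : 0 < r) (hrx : r ≤ ‖qx - q₁‖) (hry : r ≤ ‖qy - q₁‖) :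
    ‖(q₁ + (r / ‖qx - q₁‖) • (qx - q₁)) - (q₁ + (r / ‖qy - q₁‖) • (qy - q₁))‖
      ≥ r :=
  stmt6_general d q₁ qx qy r hx1 hy1 h1 h2
end

section
/- Suppose a point in B(q_i, l_i) lies in the ball B(k, h) and some point X_j ∈ B(q_j, l_j) (j ≠ i, where l_i = β N_i, l_j = β N_j are β-fractions of nearest-neighbor distances) satisfies ‖X_j − k‖ ≤ h/β, with 0 < β < 1/3. Then l_i (1 − 2β) ≤ (1 + β) h, and consequently B(q_i, l_i) ⊆ B(k, (3/(1−2β)) h). -/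
/-!
The point `Xⱼ` is far from `qᵢ`: it lies within `β Nⱼ ≤ β ‖qᵢ - qⱼ‖` of `qⱼ`, so
`‖Xⱼ - qᵢ‖ ≥ (1 - β) ‖qᵢ - qⱼ‖ ≥ (1 - β) Nᵢ`. It is also close to `qᵢ`, through `k`:
`‖Xⱼ - qᵢ‖ ≤ h / β + h + β Nᵢ`. Comparing the two bounds and multiplying by `β` gives
`lᵢ (1 - 2β) ≤ (1 + β) h`, and the ball inclusion follows from `‖k - qᵢ‖ ≤ h + lᵢ`.
-/

open Metric

section ExpansionFactor

variable {α : Type*} [PseudoMetricSpace α]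

lemma one_sub_mul_dist_le_dist_of_dist_le_mul {x y z : α} {β : ℝ}
    (hz : dist z y ≤ β * dist x y) : (1 - β) * dist x y ≤ dist x z := by
  linarith [dist_triangle x z y]

lemma mul_one_sub_two_mul_le_of_dist_le_div {qi qj Xj k : α} {β Ni Nj h : ℝ}
    (hβ0 : 0 < β) (hβ1 : β < 1)
    (hNi : Ni ≤ dist qi qj) (hNj : Nj ≤ dist qi qj)
    (hmeet : (closedBall qi (β * Ni) ∩ closedBall k h).Nonempty)
    (hXj : dist Xj qj ≤ β * Nj) (hXk : dist Xj k ≤ h / β) :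
    β * Ni * (1 - 2 * β) ≤ (1 + β) * h := by
  have hXj_near_qj : dist Xj qj ≤ β * dist qi qj :=
    hXj.trans (mul_le_mul_of_nonneg_left hNj hβ0.le)
  have hlower : (1 - β) * Ni ≤ dist qi Xj :=
    (mul_le_mul_of_nonneg_left hNi (by linarith)).trans
      (one_sub_mul_dist_le_dist_of_dist_le_mul hXj_near_qj)
  have hupper : dist qi Xj ≤ β * Ni + h + h / β := by
    have hqk := dist_le_add_of_nonempty_closedBall_inter_closedBall hmeet
    linarith [dist_triangle qi k Xj, dist_comm Xj k]
  have hscaled : β * ((1 - β) * Ni) ≤ β * (β * Ni + h + h / β) :=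
    mul_le_mul_of_nonneg_left (hlower.trans hupper) hβ0.le
  rw [mul_add, mul_div_cancel₀ h hβ0.ne'] at hscaled
  linarith

end ExpansionFactor

theorem stmt7_general (d : ℕ) (qi qj Xj k : EuclideanSpace ℝ (Fin d))
    (β Ni Nj li lj h : ℝ)
    (hβ0 : 0 < β) (hβ : β < 1 / 3)
    (hli : li = β * Ni) (hlj : lj = β * Nj)
    (hNi : Ni ≤ dist qi qj) (hNj : Nj ≤ dist qi qj)
    (hmeet : (closedBall qi li ∩ closedBall k h).Nonempty)
    (hXj : dist Xj qj ≤ lj) (hXk : dist Xj k ≤ h / β) :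
    li * (1 - 2 * β) ≤ (1 + β) * h ∧
      closedBall qi li ⊆ closedBall k ((3 / (1 - 2 * β)) * h) := by
  subst hli hlj
  have hbound := mul_one_sub_two_mul_le_of_dist_le_div hβ0 (by linarith) hNi hNj hmeet hXj hXk
  refine ⟨hbound, closedBall_subset_closedBall' ?_⟩
  have hqk := dist_le_add_of_nonempty_closedBall_inter_closedBall hmeet
  rw [div_mul_eq_mul_div, le_div_iff₀ (by linarith)]
  nlinarith

/-- Expansion factor: if the truth ball `B(qᵢ, lᵢ)` meets the
hypothesis ball `B(k, h)` and some `X_j ∈ B(q_j, l_j)` (`j ≠ i`) lies within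
`B(k, h/β)`, with `0 < β < 1/3`, then `lᵢ (1 - 2β) ≤ (1 + β) h` and
`B(qᵢ, lᵢ) ⊆ B(k, (3/(1-2β)) h)`. -/
theorem stmt7 (d : ℕ) (qi qj Xj k : EuclideanSpace ℝ (Fin d))
    (β Ni Nj li lj h : ℝ)
    (hβ0 : 0 < β) (hβ : β < 1 / 3) (hh : 0 < h)
    (hNi0 : 0 < Ni) (hNj0 : 0 < Nj)
    (hli : li = β * Ni) (hlj : lj = β * Nj)
    (hNi : Ni ≤ dist qi qj) (hNj : Nj ≤ dist qi qj)
    (hmeet : (closedBall qi li ∩ closedBall k h).Nonempty)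
    (hXj : dist Xj qj ≤ lj) (hXk : dist Xj k ≤ h / β) :
    li * (1 - 2 * β) ≤ (1 + β) * h ∧
      closedBall qi li ⊆ closedBall k ((3 / (1 - 2 * β)) * h) :=
  stmt7_general d qi qj Xj k β Ni Nj li lj h hβ0 hβ hli hlj hNi hNj hmeet hXj hXk
end

section
/- Let Φ(s, l, h) = log(max(s, l, h)/√(l h)). Suppose s, l change to s', l' with s' ≤ s + (α/β) l, (1 − α) l ≤ l' ≤ (1 + α) l, and h unchanged, where 0 < α < 1 and 0 < β < 1. Then Φ(s', l', h) − Φ(s, l, h) ≤ log((1 + α/β)/√(1 − α)). That is, one evolver step changes the potential of the moved point by at most a constant. -/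
/-! Both `s + (α/β) l` and `(1 + α) l` are at most `(1 + α/β) max(s, l, h)` because `α ≤ α/β`,
so the maximum grows by at most the factor `1 + α/β`; meanwhile `l' ≥ (1 - α) l` lets
`√(l h)` shrink by at most the factor `√(1 - α)`. -/

open Real

theorem max_max_le_one_add_mul_max_max {s l h s' l' a c : ℝ}
    (hl : 0 ≤ l) (hc : 0 ≤ c) (hac : a ≤ c)
    (hs' : s' ≤ s + c * l) (hl' : l' ≤ (1 + a) * l) :
    max s' (max l' h) ≤ (1 + c) * max s (max l h) := by
  have hsM : s ≤ max s (max l h) := le_max_left _ _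
  have hlM : l ≤ max s (max l h) := (le_max_left _ _).trans (le_max_right _ _)
  have hhM : h ≤ max s (max l h) := (le_max_right _ _).trans (le_max_right _ _)
  refine max_le ?_ (max_le ?_ ?_)
  · nlinarith
  · nlinarith
  · nlinarith

theorem log_div_sqrt_mul_sub_le {M M' l l' h C κ : ℝ}
    (hM : 0 < M) (hM' : 0 < M') (hl : 0 < l) (hl' : 0 < l') (hh : 0 < h) (hκ : 0 < κ)
    (hMM' : M' ≤ C * M) (hll' : κ * l ≤ l') :
    log (M' / √(l' * h)) - log (M / √(l * h)) ≤ log (C / √κ) := by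
  have hlh : 0 < √(l * h) := sqrt_pos.2 (by positivity)
  have hl'h : 0 < √(l' * h) := sqrt_pos.2 (by positivity)
  have hsqrt : √κ * √(l * h) ≤ √(l' * h) := by
    rw [← sqrt_mul hκ.le]
    exact sqrt_le_sqrt (by nlinarith)
  rw [← log_div (by positivity) (by positivity)]
  refine log_le_log (by positivity) ?_
  rw [div_div_div_eq, div_le_div_iff₀ (by positivity) (sqrt_pos.2 hκ)]
  calc M' * √(l * h) * √κ ≤ (C * M) * √(l' * h) := by
        rw [mul_assoc, mul_comm (√(l * h))]
        exact mul_le_mul hMM' hsqrt (by positivity) (hM'.le.trans hMM')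
    _ = C * (√(l' * h) * M) := by ring

theorem stmt11_general (s l h s' l' α β : ℝ)
    (hl : 0 < l) (hh : 0 < h) (hl' : 0 < l')
    (hα : 0 < α) (hα1 : α < 1) (hβ : 0 < β) (hβ1 : β < 1)
    (hsle : s' ≤ s + (α / β) * l)
    (hllo : (1 - α) * l ≤ l') (hlhi : l' ≤ (1 + α) * l)
    (Φ : ℝ → ℝ → ℝ → ℝ)
    (hΦ : Φ = fun s l h => Real.log (max s (max l h) / Real.sqrt (l * h))) :
    Φ s' l' h - Φ s l h ≤ Real.log ((1 + α / β) / Real.sqrt (1 - α)) := by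
  subst hΦ
  have hαβ : α ≤ α / β := le_div_self hα.le hβ hβ1.le
  have hmax : ∀ x y : ℝ, 0 < max x (max y h) := fun _ _ =>
    lt_max_of_lt_right (lt_max_of_lt_right hh)
  exact log_div_sqrt_mul_sub_le (hmax s l) (hmax s' l') hl hl' hh (by linarith)
    (max_max_le_one_add_mul_max_max hl.le (by positivity) hαβ hsle hlhi) hllo

/-- One evolver step changes the potential of the moved point by at
most a constant: if `s' ≤ s + (α/β) l` and `(1-α) l ≤ l' ≤ (1+α) l` with `h`
unchanged, then `Φ(s',l',h) - Φ(s,l,h) ≤ log ((1 + α/β)/√(1-α))`. -/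
theorem stmt11 (s l h s' l' α β : ℝ)
    (hs : 0 < s) (hl : 0 < l) (hh : 0 < h) (hs' : 0 < s') (hl' : 0 < l')
    (hα : 0 < α) (hα1 : α < 1) (hβ : 0 < β) (hβ1 : β < 1)
    (hsle : s' ≤ s + (α / β) * l)
    (hllo : (1 - α) * l ≤ l') (hlhi : l' ≤ (1 + α) * l)
    (Φ : ℝ → ℝ → ℝ → ℝ)
    (hΦ : Φ = fun s l h => Real.log (max s (max l h) / Real.sqrt (l * h))) :
    Φ s' l' h - Φ s l h ≤ Real.log ((1 + α / β) / Real.sqrt (1 - α)) :=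
  stmt11_general s l h s' l' α β hl hh hl' hα hα1 hβ hβ1 hsle hllo hlhi Φ hΦ
end

section
/- Let 0 < β < 1/3 and suppose: (i) B(q, l) ∩ B(k, h) ≠ ∅ (s = ‖q − k‖ ≤ h + l); (ii) some point X_j with ‖X_j − q_j‖ ≤ l_j ≤ l satisfies ‖X_j − k‖ > h/β, where q_j is the nearest neighbor of q so ‖X_j − q‖ ≤ l/β + l_j; and (iii) l ≤ 2h. Then Φ(s, l, h) = log(max(s,l,h)/√(lh)) ≤ log(3 √((1+2β)/(1−β))). In particular the potential is bounded by a constant depending only on β. -/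
/-!
Going from `k` to `X_j` through `q` and its nearest neighbour `q_j` gives
`h / β < ‖X_j - k‖ ≤ (l / β + l) + (l + h)`, i.e. `(1 - β) h < (1 + 2β) l`.
Together with `s ≤ l + h` and `l ≤ 2h` this bounds `max s l h` by `3h` from above and
`√(lh)` by `h √((1 - β) / (1 + 2β))` from below.
-/

open Metric

lemma one_sub_mul_lt_one_add_two_mul_of_div_lt {β l h : ℝ} (hβ : 0 < β)
    (H : h / β < l / β + l + (l + h)) : (1 - β) * h < (1 + 2 * β) * l := by
  have : h - l < (2 * l + h) * β := by
    rw [← div_lt_iff₀ hβ, sub_div]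
    linarith
  linarith

lemma div_sqrt_mul_le_mul_sqrt_div {a b C h l m : ℝ} (ha : 0 < a) (hb : 0 < b) (hh : 0 < h)
    (hl : 0 < l) (hC : 0 ≤ C) (hlh : a * h ≤ b * l) (hm : m ≤ C * h) :
    m / √(l * h) ≤ C * √(b / a) := by
  have hsqrt : h * √(a / b) ≤ √(l * h) := by
    rw [Real.le_sqrt (by positivity) (mul_pos hl hh).le, mul_pow, Real.sq_sqrt (by positivity), mul_div_assoc',
      div_le_iff₀ hb]
    nlinarith [mul_le_mul_of_nonneg_left hlh hh.le]
  calc m / √(l * h) ≤ C * h / (h * √(a / b)) :=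
        div_le_div₀ (by positivity) hm (by positivity) hsqrt
    _ = C * √(b / a) := by
        rw [← inv_div b a, Real.sqrt_inv]
        field_simp

theorem stmt19_general (d : ℕ) (q qj Xj k : EuclideanSpace ℝ (Fin d))
    (β l lj h s : ℝ) (hβ0 : 0 < β) (hβ : β < 1 / 3)
    (hh : 0 < h)
    (hs : s = ‖q - k‖)
    (hmeet : (closedBall q l ∩ closedBall k h).Nonempty)
    (hnear : ‖q - qj‖ = l / β)
    (hXj : ‖Xj - qj‖ ≤ lj) (hljl : lj ≤ l)
    (hout : ‖Xj - k‖ > h / β)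
    (hl2h : l ≤ 2 * h) :
    Real.log (max s (max l h) / Real.sqrt (l * h)) ≤
      Real.log (3 * Real.sqrt ((1 + 2 * β) / (1 - β))) := by
  have hs_le : s ≤ l + h := by
    rw [hs, ← dist_eq_norm]
    exact dist_le_add_of_nonempty_closedBall_inter_closedBall hmeet
  have hXq : ‖Xj - q‖ ≤ l / β + l := by
    rw [← hnear, norm_sub_rev q]
    linarith [norm_sub_le_norm_sub_add_norm_sub Xj qj q]
  have hkey : (1 - β) * h < (1 + 2 * β) * l :=
    one_sub_mul_lt_one_add_two_mul_of_div_lt hβ0 <| by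
      linarith [norm_sub_le_norm_sub_add_norm_sub Xj q k]
  have hmax : max s (max l h) ≤ 3 * h :=
    max_le (by linarith) (max_le (by linarith) (by linarith))
  have hl : 0 < l := by nlinarith
  refine Real.log_le_log (div_pos (hh.trans_le (le_max_of_le_right (le_max_right l h)))
    (by positivity)) ?_
  exact div_sqrt_mul_le_mul_sqrt_div (by linarith) (by linarith) hh hl (by norm_num) hkey.le hmax

/-- Done tracking: if the truth ball `B(q,l)` meets the hypothesis
ball `B(k,h)`, the nearest neighbor's sample `X_j` lies outside the
`1/β`-expansion of `B(k,h)`, and `l ≤ 2h`, then the potential is bounded by the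
constant `log (3 √((1+2β)/(1-β)))`. -/
theorem stmt19 (d : ℕ) (q qj Xj k : EuclideanSpace ℝ (Fin d))
    (β l lj h s : ℝ) (hβ0 : 0 < β) (hβ : β < 1 / 3)
    (hl : 0 < l) (hlj : 0 < lj) (hh : 0 < h)
    (hs : s = ‖q - k‖)
    (hmeet : (closedBall q l ∩ closedBall k h).Nonempty)
    (hnear : ‖q - qj‖ = l / β)
    (hXj : ‖Xj - qj‖ ≤ lj) (hljl : lj ≤ l)
    (hout : ‖Xj - k‖ > h / β)
    (hl2h : l ≤ 2 * h) :
    Real.log (max s (max l h) / Real.sqrt (l * h)) ≤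
      Real.log (3 * Real.sqrt ((1 + 2 * β) / (1 - β))) :=
  stmt19_general d q qj Xj k β l lj h s hβ0 hβ hh hs hmeet hnear hXj hljl hout hl2h
end
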